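/- Let 𝒱 be a left skew-closed category and let (G, ε, δ) be a closed comonad on 𝒱: G : 𝒱 → 𝒱 is a closed functor with data (ψ₀, ψ); ε_A : GA → A and δ_A : GA → GGA are natural transformations satisfying the comonad laws ε_{GA} ∘ δ_A = 1_{GA} = G(ε_A) ∘ δ_A and δ_{GA} ∘ δ_A = G(δ_A) ∘ δ_A; and ε : G ⇒ Id and δ : G ⇒ GG are closed natural transformations (Id being the identity closed functor and GG the composite closed functor). Then the following data define another left skew-closed structure on 𝒱: hom functor ⟨A,B⟩ = [GA,B]; the same unit object I; i'_A = i_A ∘ [ψ₀,1] : [GI,A] → A; j'_A = [ε_A,1] ∘ j_A : I → [GA,A]; and L' = [v_{C,A},1] ∘ L^{GC}_{GA,B} : [GA,B] → [G[GC,A],[GC,B]], where v_{C,A} = [δ_C,1] ∘ ψ_{GC,A} : G[GC,A] → [GC,GA]. That is, these data satisfy axioms (SCC1)–(SCC5). -/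

import Mathlib

/-!
The key observation is that `G`, equipped with `ψ₀` and `v`, satisfies the closed-functor axioms
(SCF1)–(SCF3) as a functor from the new structure `⟨-,-⟩` to the old one `[-,-]`
(`comonadV_SCF1`–`comonadV_SCF3`), and that `v ≫ [1,ε] = ε`. With these, each new axiom is pushed
through the (extra)naturality of `L` onto the corresponding old axiom. (SCF3) for `v` rests on
`δ ≫ G v ≫ v = v ≫ [1,δ]`, which is where coassociativity and closedness of `δ` enter.
-/

open CategoryTheory

universe v u w

/-- A left skew-closed category structure on a category `V` (Street, "Skew-closed categories"). -/
structure SkewClosedStruct (V : Type u) [Category.{v} V] where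
  ihom : V → V → V
  imap : ∀ {A A' B B' : V}, (A' ⟶ A) → (B ⟶ B') → (ihom A B ⟶ ihom A' B')
  imap_id : ∀ (A B : V), imap (𝟙 A) (𝟙 B) = 𝟙 (ihom A B)
  imap_comp : ∀ {A A' A'' B B' B'' : V} (f : A' ⟶ A) (f' : A'' ⟶ A') (g : B ⟶ B') (g' : B' ⟶ B''),
      imap (f' ≫ f) (g ≫ g') = imap f g ≫ imap f' g'
  unit : V
  i : ∀ A : V, ihom unit A ⟶ A
  i_natural : ∀ {A B : V} (f : A ⟶ B), imap (𝟙 unit) f ≫ i B = i A ≫ f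
  j : ∀ A : V, unit ⟶ ihom A A
  j_natural : ∀ {A B : V} (f : A ⟶ B), j A ≫ imap (𝟙 A) f = j B ≫ imap f (𝟙 B)
  L : ∀ A B C : V, ihom B C ⟶ ihom (ihom A B) (ihom A C)
  L_natural : ∀ {B B' C C' : V} (A : V) (f : B' ⟶ B) (g : C ⟶ C'),
      imap f g ≫ L A B' C' = L A B C ≫ imap (imap (𝟙 A) f) (imap (𝟙 A) g)
  L_extranatural : ∀ {A A' : V} (h : A' ⟶ A) (B C : V),
      L A B C ≫ imap (𝟙 (ihom A B)) (imap h (𝟙 C))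
        = L A' B C ≫ imap (imap h (𝟙 B)) (𝟙 (ihom A' C))
  SCC1 : ∀ A B C D : V,
      L A C D ≫ L (ihom A B) (ihom A C) (ihom A D) ≫
          imap (L A B C) (𝟙 (ihom (ihom A B) (ihom A D)))
        = L B C D ≫ imap (𝟙 (ihom B C)) (L A B D)
  SCC2 : ∀ A C : V, L A A C ≫ imap (j A) (𝟙 (ihom A C)) ≫ i (ihom A C) = 𝟙 (ihom A C)
  SCC3 : ∀ A B : V, j B ≫ L A B B = j (ihom A B)
  SCC4 : ∀ B C : V, L unit B C ≫ imap (𝟙 (ihom unit B)) (i C) = imap (i B) (𝟙 C)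
  SCC5 : j unit ≫ i unit = 𝟙 unit

/-- A closed functor between left skew-closed categories. -/
structure ClosedFunctorStruct {V : Type u} {W : Type w} [Category.{v} V] [Category.{v} W]
    (𝒱 : SkewClosedStruct V) (𝒲 : SkewClosedStruct W) (F : V ⥤ W) where
  ψ0 : 𝒲.unit ⟶ F.obj 𝒱.unit
  ψ : ∀ A B : V, F.obj (𝒱.ihom A B) ⟶ 𝒲.ihom (F.obj A) (F.obj B)
  ψ_natural : ∀ {A A' B B' : V} (f : A' ⟶ A) (g : B ⟶ B'),
      F.map (𝒱.imap f g) ≫ ψ A' B' = ψ A B ≫ 𝒲.imap (F.map f) (F.map g)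
  SCF1 : ∀ A : V,
      ψ 𝒱.unit A ≫ 𝒲.imap ψ0 (𝟙 (F.obj A)) ≫ 𝒲.i (F.obj A) = F.map (𝒱.i A)
  SCF2 : ∀ A : V, ψ0 ≫ F.map (𝒱.j A) ≫ ψ A A = 𝒲.j (F.obj A)
  SCF3 : ∀ A B C : V,
      F.map (𝒱.L A B C) ≫ ψ (𝒱.ihom A B) (𝒱.ihom A C) ≫
          𝒲.imap (𝟙 (F.obj (𝒱.ihom A B))) (ψ A C)
        = ψ B C ≫ 𝒲.L (F.obj A) (F.obj B) (F.obj C) ≫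
            𝒲.imap (ψ A B) (𝟙 (𝒲.ihom (F.obj A) (F.obj C)))

section ClosedComonad

variable {V : Type u} [Category.{v} V] (𝒱 : SkewClosedStruct V)
variable (G : V ⥤ V) (cG : ClosedFunctorStruct 𝒱 𝒱 G)
variable (ε : ∀ A : V, G.obj A ⟶ A) (δ : ∀ A : V, G.obj A ⟶ G.obj (G.obj A))

/-- The hom of the skew-closed structure induced by a closed comonad: `⟨A,B⟩ = [GA,B]`. -/
def comonadIhom (A B : V) : V := 𝒱.ihom (G.obj A) B

/-- The action on morphisms of the induced hom: `⟨f,g⟩ = [Gf,g]`. -/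
def comonadImap {A A' B B' : V} (f : A' ⟶ A) (g : B ⟶ B') :
    comonadIhom 𝒱 G A B ⟶ comonadIhom 𝒱 G A' B' := 𝒱.imap (G.map f) g

/-- The induced `i`: the composite `[GI,A] ⟶ [I,A] ⟶ A` of `[ψ₀,1]` and `i`. -/
def comonadI (A : V) : comonadIhom 𝒱 G 𝒱.unit A ⟶ A :=
  𝒱.imap cG.ψ0 (𝟙 A) ≫ 𝒱.i A

/-- The induced `j`: the composite `I ⟶ [A,A] ⟶ [GA,A]` of `j` and `[ε_A,1]`. -/
def comonadJ (A : V) : 𝒱.unit ⟶ comonadIhom 𝒱 G A A :=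
  𝒱.j A ≫ 𝒱.imap (ε A) (𝟙 A)

/-- The comparison morphism `v_{C,A} = [δ_C,1] ∘ ψ_{GC,A} : G[GC,A] ⟶ [GC,GA]`. -/
def comonadV (C A : V) : G.obj (𝒱.ihom (G.obj C) A) ⟶ 𝒱.ihom (G.obj C) (G.obj A) :=
  cG.ψ (G.obj C) A ≫ 𝒱.imap (δ C) (𝟙 (G.obj A))

/-- The induced `L`: `[v_{C,A},1] ∘ L^{GC} : [GA,B] ⟶ [G[GC,A],[GC,B]]`. -/
def comonadL (C A B : V) :
    comonadIhom 𝒱 G A B ⟶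
      comonadIhom 𝒱 G (comonadIhom 𝒱 G C A) (comonadIhom 𝒱 G C B) :=
  𝒱.L (G.obj C) (G.obj A) B ≫ 𝒱.imap (comonadV 𝒱 G cG δ C A) (𝟙 (𝒱.ihom (G.obj C) B))

namespace SkewClosedStruct

theorem imap_comp_imap {A A' A'' B B' B'' : V} (f : A' ⟶ A) (f' : A'' ⟶ A') (g : B ⟶ B')
    (g' : B' ⟶ B'') : 𝒱.imap f g ≫ 𝒱.imap f' g' = 𝒱.imap (f' ≫ f) (g ≫ g') :=
  (𝒱.imap_comp f f' g g').symm

theorem imap_comp_imap_assoc {A A' A'' B B' B'' Z : V} (f : A' ⟶ A) (f' : A'' ⟶ A')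
    (g : B ⟶ B') (g' : B' ⟶ B'') (h : 𝒱.ihom A'' B'' ⟶ Z) :
    𝒱.imap f g ≫ 𝒱.imap f' g' ≫ h = 𝒱.imap (f' ≫ f) (g ≫ g') ≫ h := by
  rw [← Category.assoc, imap_comp_imap]

theorem imap_id_comm {A A' B B' : V} (f : A' ⟶ A) (g : B ⟶ B') :
    𝒱.imap f (𝟙 B) ≫ 𝒱.imap (𝟙 A') g = 𝒱.imap (𝟙 A) g ≫ 𝒱.imap f (𝟙 B') := by
  simp only [imap_comp_imap, Category.id_comp, Category.comp_id]

theorem imap_id_comp {A B B' B'' : V} (g : B ⟶ B') (g' : B' ⟶ B'') :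
    𝒱.imap (𝟙 A) (g ≫ g') = 𝒱.imap (𝟙 A) g ≫ 𝒱.imap (𝟙 A) g' := by
  rw [imap_comp_imap, Category.id_comp]

theorem imap_comp_id {A A' A'' B : V} (f : A' ⟶ A) (f' : A'' ⟶ A') :
    𝒱.imap (f' ≫ f) (𝟙 B) = 𝒱.imap f (𝟙 B) ≫ 𝒱.imap f' (𝟙 B) := by
  rw [imap_comp_imap, Category.comp_id]

end SkewClosedStruct

variable {𝒱} in
theorem ClosedFunctorStruct.ψ_natural_left {W : Type w} [Category.{v} W]
    {𝒲 : SkewClosedStruct W} {F : V ⥤ W} (cF : ClosedFunctorStruct 𝒱 𝒲 F) {A A' : V}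
    (f : A' ⟶ A) (B : V) :
    F.map (𝒱.imap f (𝟙 B)) ≫ cF.ψ A' B = cF.ψ A B ≫ 𝒲.imap (F.map f) (𝟙 (F.obj B)) := by
  simpa using cF.ψ_natural f (𝟙 B)

open SkewClosedStruct

theorem comonadV_comp_imap_counit (counit_left : ∀ A, δ A ≫ ε (G.obj A) = 𝟙 (G.obj A))
    (ε_closed : ∀ A B : V,
      ε (𝒱.ihom A B) ≫ 𝒱.imap (ε A) (𝟙 B) = cG.ψ A B ≫ 𝒱.imap (𝟙 (G.obj A)) (ε B))
    (A B : V) :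
    comonadV 𝒱 G cG δ A B ≫ 𝒱.imap (𝟙 (G.obj A)) (ε B) = ε (𝒱.ihom (G.obj A) B) := by
  calc comonadV 𝒱 G cG δ A B ≫ 𝒱.imap (𝟙 (G.obj A)) (ε B)
      = (cG.ψ (G.obj A) B ≫ 𝒱.imap (𝟙 _) (ε B)) ≫ 𝒱.imap (δ A) (𝟙 B) := by
        simp only [comonadV, Category.assoc, imap_id_comm]
    _ = ε _ ≫ 𝒱.imap (δ A ≫ ε (G.obj A)) (𝟙 B) := by
        rw [← ε_closed, Category.assoc, imap_comp_imap, Category.comp_id]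
    _ = ε _ := by rw [counit_left, imap_id, Category.comp_id]

theorem comonadV_SCF1 (δ_closed₀ : cG.ψ0 ≫ δ 𝒱.unit = cG.ψ0 ≫ G.map cG.ψ0) (B : V) :
    comonadV 𝒱 G cG δ 𝒱.unit B ≫ 𝒱.imap cG.ψ0 (𝟙 (G.obj B)) ≫ 𝒱.i (G.obj B)
      = G.map (comonadI 𝒱 G cG B) := by
  dsimp only [comonadI, comonadIhom]
  rw [Functor.map_comp]
  calc comonadV 𝒱 G cG δ 𝒱.unit B ≫ 𝒱.imap cG.ψ0 (𝟙 (G.obj B)) ≫ 𝒱.i (G.obj B)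
      = cG.ψ (G.obj 𝒱.unit) B ≫ 𝒱.imap (cG.ψ0 ≫ G.map cG.ψ0) (𝟙 (G.obj B)) ≫
          𝒱.i (G.obj B) := by
        rw [comonadV, Category.assoc, imap_comp_imap_assoc, δ_closed₀, Category.comp_id]
    _ = G.map (𝒱.imap cG.ψ0 (𝟙 B)) ≫ cG.ψ 𝒱.unit B ≫ 𝒱.imap cG.ψ0 (𝟙 (G.obj B)) ≫
          𝒱.i (G.obj B) := by
        rw [reassoc_of% (cG.ψ_natural_left cG.ψ0 B), imap_comp_imap_assoc, Category.comp_id]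
    _ = G.map (𝒱.imap cG.ψ0 (𝟙 B)) ≫ G.map (𝒱.i B) := by rw [cG.SCF1]

theorem comonadV_SCF2 (counit_right : ∀ A, δ A ≫ G.map (ε A) = 𝟙 (G.obj A)) (A : V) :
    cG.ψ0 ≫ G.map (comonadJ 𝒱 G ε A) ≫ comonadV 𝒱 G cG δ A A = 𝒱.j (G.obj A) := by
  dsimp only [comonadJ, comonadV, comonadIhom]
  calc _
      = cG.ψ0 ≫ G.map (𝒱.j A) ≫ cG.ψ A A ≫
          𝒱.imap (δ A ≫ G.map (ε A)) (𝟙 (G.obj A)) := by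
        simp only [Functor.map_comp, Category.assoc,
          reassoc_of% (cG.ψ_natural_left (ε A) A), imap_comp_imap, Category.comp_id]
    _ = 𝒱.j (G.obj A) := by rw [counit_right, imap_id, Category.comp_id, cG.SCF2]

theorem δ_comp_map_comonadV_comp_comonadV
    (coassoc : ∀ A, δ A ≫ δ (G.obj A) = δ A ≫ G.map (δ A))
    (δ_closed : ∀ A B : V,
      δ (𝒱.ihom A B) ≫ G.map (cG.ψ A B) ≫ cG.ψ (G.obj A) (G.obj B) ≫
          𝒱.imap (δ A) (𝟙 (G.obj (G.obj B)))
        = cG.ψ A B ≫ 𝒱.imap (𝟙 (G.obj A)) (δ B))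
    (A B : V) :
    δ (𝒱.ihom (G.obj A) B) ≫ G.map (comonadV 𝒱 G cG δ A B) ≫ comonadV 𝒱 G cG δ A (G.obj B)
      = comonadV 𝒱 G cG δ A B ≫ 𝒱.imap (𝟙 (G.obj A)) (δ B) := by
  calc δ (𝒱.ihom (G.obj A) B) ≫ G.map (comonadV 𝒱 G cG δ A B) ≫
        comonadV 𝒱 G cG δ A (G.obj B)
      = δ (𝒱.ihom (G.obj A) B) ≫ G.map (cG.ψ (G.obj A) B) ≫
          cG.ψ (G.obj (G.obj A)) (G.obj B) ≫
          𝒱.imap (δ A ≫ G.map (δ A)) (𝟙 (G.obj (G.obj B))) := by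
        simp only [comonadV, Functor.map_comp, Category.assoc,
          reassoc_of% (cG.ψ_natural_left (δ A) (G.obj B)), imap_comp_imap, Category.comp_id]
    _ = cG.ψ (G.obj A) B ≫ 𝒱.imap (𝟙 (G.obj (G.obj A))) (δ B) ≫
          𝒱.imap (δ A) (𝟙 (G.obj (G.obj B))) := by
        rw [← coassoc, imap_comp_id, reassoc_of% (δ_closed (G.obj A) B)]
    _ = comonadV 𝒱 G cG δ A B ≫ 𝒱.imap (𝟙 (G.obj A)) (δ B) := by
        rw [comonadV, Category.assoc, imap_id_comm]

theorem comonadV_SCF3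
    (coassoc : ∀ A, δ A ≫ δ (G.obj A) = δ A ≫ G.map (δ A))
    (δ_closed : ∀ A B : V,
      δ (𝒱.ihom A B) ≫ G.map (cG.ψ A B) ≫ cG.ψ (G.obj A) (G.obj B) ≫
          𝒱.imap (δ A) (𝟙 (G.obj (G.obj B)))
        = cG.ψ A B ≫ 𝒱.imap (𝟙 (G.obj A)) (δ B))
    (A B C : V) :
    G.map (comonadL 𝒱 G cG δ A B C) ≫
        comonadV 𝒱 G cG δ (𝒱.ihom (G.obj A) B) (𝒱.ihom (G.obj A) C) ≫
        𝒱.imap (𝟙 (G.obj (𝒱.ihom (G.obj A) B))) (comonadV 𝒱 G cG δ A C)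
      = comonadV 𝒱 G cG δ B C ≫ 𝒱.L (G.obj A) (G.obj B) (G.obj C) ≫
          𝒱.imap (comonadV 𝒱 G cG δ A B) (𝟙 (𝒱.ihom (G.obj A) (G.obj C))) := by
  dsimp only [comonadL, comonadIhom]
  calc _
      = G.map (𝒱.L (G.obj A) (G.obj B) C) ≫
          cG.ψ (𝒱.ihom (G.obj A) (G.obj B)) (𝒱.ihom (G.obj A) C) ≫
          𝒱.imap (𝟙 _) (cG.ψ (G.obj A) C) ≫
          𝒱.imap (δ (𝒱.ihom (G.obj A) B) ≫ G.map (comonadV 𝒱 G cG δ A B)) (𝟙 _) ≫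
          𝒱.imap (𝟙 _) (𝒱.imap (δ A) (𝟙 (G.obj C))) := by
        simp only [comonadV, Functor.map_comp, Category.assoc, reassoc_of% cG.ψ_natural_left,
          imap_comp_imap, Category.id_comp, Category.comp_id]
    _ = cG.ψ (G.obj B) C ≫ 𝒱.L (G.obj (G.obj A)) (G.obj (G.obj B)) (G.obj C) ≫
          𝒱.imap (𝟙 _) (𝒱.imap (δ A) (𝟙 (G.obj C))) ≫
          𝒱.imap (δ (𝒱.ihom (G.obj A) B) ≫ G.map (comonadV 𝒱 G cG δ A B) ≫
            cG.ψ (G.obj A) (G.obj B)) (𝟙 _) := by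
        rw [reassoc_of% (cG.SCF3 (G.obj A) (G.obj B) C), imap_comp_imap_assoc,
          Category.comp_id, imap_id_comm, Category.assoc]
    _ = cG.ψ (G.obj B) C ≫ 𝒱.L (G.obj A) (G.obj (G.obj B)) (G.obj C) ≫
          𝒱.imap (δ (𝒱.ihom (G.obj A) B) ≫ G.map (comonadV 𝒱 G cG δ A B) ≫
            comonadV 𝒱 G cG δ A (G.obj B)) (𝟙 _) := by
        rw [reassoc_of% (𝒱.L_extranatural (δ A) (G.obj (G.obj B)) (G.obj C)),
          imap_comp_imap, Category.comp_id]
        simp only [comonadV, Category.assoc]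
    _ = cG.ψ (G.obj B) C ≫ 𝒱.imap (δ B) (𝟙 (G.obj C)) ≫ 𝒱.L (G.obj A) (G.obj B) (G.obj C) ≫
          𝒱.imap (comonadV 𝒱 G cG δ A B) (𝟙 _) := by
        rw [δ_comp_map_comonadV_comp_comonadV 𝒱 G cG δ coassoc δ_closed,
          reassoc_of% (𝒱.L_natural (G.obj A) (δ B) (𝟙 (G.obj C))), imap_id, imap_comp_imap,
          Category.comp_id]
    _ = _ := by simp only [comonadV, Category.assoc]

theorem comonad_SCC1
    (coassoc : ∀ A, δ A ≫ δ (G.obj A) = δ A ≫ G.map (δ A))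
    (δ_closed : ∀ A B : V,
      δ (𝒱.ihom A B) ≫ G.map (cG.ψ A B) ≫ cG.ψ (G.obj A) (G.obj B) ≫
          𝒱.imap (δ A) (𝟙 (G.obj (G.obj B)))
        = cG.ψ A B ≫ 𝒱.imap (𝟙 (G.obj A)) (δ B))
    (A B C D : V) :
    comonadL 𝒱 G cG δ A C D ≫
        comonadL 𝒱 G cG δ (comonadIhom 𝒱 G A B) (comonadIhom 𝒱 G A C)
          (comonadIhom 𝒱 G A D) ≫
        comonadImap 𝒱 G (comonadL 𝒱 G cG δ A B C)
          (𝟙 (comonadIhom 𝒱 G (comonadIhom 𝒱 G A B) (comonadIhom 𝒱 G A D)))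
      = comonadL 𝒱 G cG δ B C D ≫
          comonadImap 𝒱 G (𝟙 (comonadIhom 𝒱 G B C)) (comonadL 𝒱 G cG δ A B D) := by
  dsimp only [comonadL, comonadImap, comonadIhom]
  calc _
      = 𝒱.L (G.obj A) (G.obj C) D ≫
          𝒱.L (G.obj (𝒱.ihom (G.obj A) B)) (𝒱.ihom (G.obj A) (G.obj C)) (𝒱.ihom (G.obj A) D) ≫
          𝒱.imap (comonadV 𝒱 G cG δ B C ≫ 𝒱.L (G.obj A) (G.obj B) (G.obj C) ≫
            𝒱.imap (comonadV 𝒱 G cG δ A B) (𝟙 _)) (𝟙 _) := by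
        simp only [Category.assoc, reassoc_of% 𝒱.L_natural, imap_comp_imap, imap_id,
          Category.comp_id]
        -- `erw`: the goal has the `comonadIhom` inside `G.map (comonadL ..)` unfolded.
        erw [comonadV_SCF3 𝒱 G cG δ coassoc δ_closed]
    _ = 𝒱.L (G.obj A) (G.obj C) D ≫
          𝒱.L (𝒱.ihom (G.obj A) (G.obj B)) (𝒱.ihom (G.obj A) (G.obj C)) (𝒱.ihom (G.obj A) D) ≫
          𝒱.imap (𝒱.L (G.obj A) (G.obj B) (G.obj C)) (𝟙 _) ≫
          𝒱.imap (𝟙 _) (𝒱.imap (comonadV 𝒱 G cG δ A B) (𝟙 _)) ≫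
          𝒱.imap (comonadV 𝒱 G cG δ B C) (𝟙 _) := by
        rw [reassoc_of% imap_id_comm, reassoc_of% 𝒱.L_extranatural, imap_comp_imap_assoc,
          imap_comp_imap]
        simp only [Category.comp_id]
    _ = _ := by
        rw [reassoc_of% 𝒱.SCC1, CategoryTheory.Functor.map_id, imap_id_comp, Category.assoc,
          reassoc_of% imap_id_comm, imap_id_comm]

theorem comonad_SCC2 (counit_right : ∀ A, δ A ≫ G.map (ε A) = 𝟙 (G.obj A)) (A C : V) :
    comonadL 𝒱 G cG δ A A C ≫
        comonadImap 𝒱 G (comonadJ 𝒱 G ε A) (𝟙 (comonadIhom 𝒱 G A C)) ≫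
        comonadI 𝒱 G cG (comonadIhom 𝒱 G A C)
      = 𝟙 (comonadIhom 𝒱 G A C) := by
  dsimp only [comonadL, comonadImap, comonadI, comonadIhom]
  rw [Category.assoc, imap_comp_imap_assoc, imap_comp_imap_assoc, Category.comp_id,
    Category.comp_id]
  erw [comonadV_SCF2 𝒱 G cG ε δ counit_right, 𝒱.SCC2]

theorem comonad_SCC3 (counit_left : ∀ A, δ A ≫ ε (G.obj A) = 𝟙 (G.obj A))
    (ε_closed : ∀ A B : V,
      ε (𝒱.ihom A B) ≫ 𝒱.imap (ε A) (𝟙 B) = cG.ψ A B ≫ 𝒱.imap (𝟙 (G.obj A)) (ε B))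
    (A B : V) :
    comonadJ 𝒱 G ε B ≫ comonadL 𝒱 G cG δ A B B = comonadJ 𝒱 G ε (comonadIhom 𝒱 G A B) := by
  dsimp only [comonadJ, comonadL, comonadIhom]
  rw [Category.assoc, reassoc_of% 𝒱.L_natural, reassoc_of% 𝒱.SCC3, imap_id, imap_comp_imap,
    Category.comp_id, comonadV_comp_imap_counit 𝒱 G cG ε δ counit_left ε_closed]

theorem comonad_SCC4 (δ_closed₀ : cG.ψ0 ≫ δ 𝒱.unit = cG.ψ0 ≫ G.map cG.ψ0) (B C : V) :
    comonadL 𝒱 G cG δ 𝒱.unit B C ≫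
        comonadImap 𝒱 G (𝟙 (comonadIhom 𝒱 G 𝒱.unit B)) (comonadI 𝒱 G cG C)
      = comonadImap 𝒱 G (comonadI 𝒱 G cG B) (𝟙 C) := by
  rw [comonadImap, comonadImap, ← comonadV_SCF1 𝒱 G cG δ δ_closed₀]
  dsimp only [comonadL, comonadI, comonadIhom]
  rw [CategoryTheory.Functor.map_id, imap_id_comp, Category.assoc, reassoc_of% imap_id_comm,
    imap_id_comm, reassoc_of% 𝒱.L_extranatural, reassoc_of% imap_id_comm,
    reassoc_of% 𝒱.SCC4]
  simp only [imap_comp_imap, Category.id_comp, Category.assoc]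

theorem comonad_SCC5 (ε_closed₀ : cG.ψ0 ≫ ε 𝒱.unit = 𝟙 𝒱.unit) :
    comonadJ 𝒱 G ε 𝒱.unit ≫ comonadI 𝒱 G cG 𝒱.unit = 𝟙 𝒱.unit := by
  dsimp only [comonadJ, comonadI, comonadIhom]
  rw [Category.assoc, imap_comp_imap_assoc, ε_closed₀, Category.comp_id, imap_id,
    Category.id_comp, 𝒱.SCC5]

theorem closed_comonad_skew_closed
    -- comonad laws:
    (counit_left : ∀ A, δ A ≫ ε (G.obj A) = 𝟙 (G.obj A))
    (counit_right : ∀ A, δ A ≫ G.map (ε A) = 𝟙 (G.obj A))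
    (coassoc : ∀ A, δ A ≫ δ (G.obj A) = δ A ≫ G.map (δ A))
    -- `ε : G ⇒ Id` is a closed natural transformation (`Id` the identity closed functor):
    (ε_closed₀ : cG.ψ0 ≫ ε 𝒱.unit = 𝟙 𝒱.unit)
    (ε_closed : ∀ A B : V,
      ε (𝒱.ihom A B) ≫ 𝒱.imap (ε A) (𝟙 B)
        = cG.ψ A B ≫ 𝒱.imap (𝟙 (G.obj A)) (ε B))
    -- `δ : G ⇒ GG` is a closed natural transformation (`GG` the composite closed functor):
    (δ_closed₀ : cG.ψ0 ≫ δ 𝒱.unit = cG.ψ0 ≫ G.map cG.ψ0)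
    (δ_closed : ∀ A B : V,
      δ (𝒱.ihom A B) ≫ G.map (cG.ψ A B) ≫ cG.ψ (G.obj A) (G.obj B) ≫
          𝒱.imap (δ A) (𝟙 (G.obj (G.obj B)))
        = cG.ψ A B ≫ 𝒱.imap (𝟙 (G.obj A)) (δ B)) :
    -- conclusion: the axioms (SCC1)–(SCC5) for the new data
    (∀ A B C D : V,
      comonadL 𝒱 G cG δ A C D ≫
          comonadL 𝒱 G cG δ (comonadIhom 𝒱 G A B) (comonadIhom 𝒱 G A C)
            (comonadIhom 𝒱 G A D) ≫
          comonadImap 𝒱 G (comonadL 𝒱 G cG δ A B C)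
            (𝟙 (comonadIhom 𝒱 G (comonadIhom 𝒱 G A B) (comonadIhom 𝒱 G A D)))
        = comonadL 𝒱 G cG δ B C D ≫
            comonadImap 𝒱 G (𝟙 (comonadIhom 𝒱 G B C)) (comonadL 𝒱 G cG δ A B D)) ∧
    (∀ A C : V,
      comonadL 𝒱 G cG δ A A C ≫
          comonadImap 𝒱 G (comonadJ 𝒱 G ε A) (𝟙 (comonadIhom 𝒱 G A C)) ≫
          comonadI 𝒱 G cG (comonadIhom 𝒱 G A C)
        = 𝟙 (comonadIhom 𝒱 G A C)) ∧
    (∀ A B : V,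
      comonadJ 𝒱 G ε B ≫ comonadL 𝒱 G cG δ A B B
        = comonadJ 𝒱 G ε (comonadIhom 𝒱 G A B)) ∧
    (∀ B C : V,
      comonadL 𝒱 G cG δ 𝒱.unit B C ≫
          comonadImap 𝒱 G (𝟙 (comonadIhom 𝒱 G 𝒱.unit B)) (comonadI 𝒱 G cG C)
        = comonadImap 𝒱 G (comonadI 𝒱 G cG B) (𝟙 C)) ∧
    (comonadJ 𝒱 G ε 𝒱.unit ≫ comonadI 𝒱 G cG 𝒱.unit = 𝟙 𝒱.unit) :=
  ⟨comonad_SCC1 𝒱 G cG δ coassoc δ_closed, comonad_SCC2 𝒱 G cG ε δ counit_right,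
    comonad_SCC3 𝒱 G cG ε δ counit_left ε_closed, comonad_SCC4 𝒱 G cG δ δ_closed₀,
    comonad_SCC5 𝒱 G cG ε ε_closed₀⟩

end ClosedComonad
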